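/- Let G be a group and let H be a normal subgroup of G with H contained in the commutator subgroup [G,G]. Let S ⊆ H be a generating set for H that is contained in finitely many orbits of the conjugation action of G on H. Suppose there is a constant C ≥ 0 such that every element of H can be written as a product of at most C elements of S ∪ S⁻¹ (i.e., the Cayley graph of H with respect to S has finite diameter). Then for every h ∈ H, the stable commutator length of h in G is zero; that is, the sequence cl(hⁿ)/n tends to 0 as n → ∞, where cl denotes commutator length in G. -/

import Mathlib

open scoped commutatorElement

/-- `g` is a product of `n` commutators in `G`. -/
def IsCommProd {G : Type*} [Group G] (n : ℕ) (g : G) : Prop :=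
  ∃ a b : Fin n → G, g = (List.ofFn fun i => ⁅a i, b i⁆).prod

/-- The commutator length of `g`: the smallest `n` such that `g` is a product of
`n` commutators. -/
noncomputable def cl {G : Type*} [Group G] (g : G) : ℕ :=
  sInf {n : ℕ | IsCommProd n g}

/-- `w` is a product of `n` elements of `S ∪ S⁻¹`. -/
def IsWordProd {G : Type*} [Group G] (S : Set G) (n : ℕ) (w : G) : Prop :=
  ∃ f : Fin n → G, (∀ i, f i ∈ S ∪ S⁻¹) ∧ w = (List.ofFn f).prod

/-- The word norm of `w` with respect to the generating set `S`: the smallest `n`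
such that `w` is a product of `n` elements of `S ∪ S⁻¹`. -/
noncomputable def wordNorm {G : Type*} [Group G] (S : Set G) (w : G) : ℕ :=
  sInf {n : ℕ | IsWordProd S n w}

/-! Each generator is conjugate to one of the finitely many `t ∈ T`, so it is a product of at most
`M = max_{t ∈ T} cl t` commutators, and so is its inverse. Since every `h ^ n` is a word of length
at most `C` in these, `cl (h ^ n) ≤ C * M` for all `n`, and a bounded sequence divided by `n` tends
to `0`. -/

open Pointwise

section commutatorSet

variable {G : Type*} [Group G] {n : ℕ} {g : G}

lemma inv_commutatorSet : (commutatorSet G)⁻¹ = commutatorSet G := by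
  ext g
  simp only [Set.mem_inv, mem_commutatorSet_iff]
  constructor
  · rintro ⟨a, b, hab⟩
    exact ⟨b, a, by rw [← commutatorElement_inv, hab, inv_inv]⟩
  · rintro ⟨a, b, rfl⟩
    exact ⟨b, a, (commutatorElement_inv a b).symm⟩

lemma inv_mem_commutatorSet_pow (hg : g ∈ commutatorSet G ^ n) : g⁻¹ ∈ commutatorSet G ^ n := by
  rwa [← Set.mem_inv, ← inv_pow, inv_commutatorSet]

lemma conj_mem_commutatorSet_pow (hg : g ∈ commutatorSet G ^ n) (c : G) :
    c * g * c⁻¹ ∈ commutatorSet G ^ n := by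
  have hconj : MulAut.conj c '' commutatorSet G ⊆ commutatorSet G := by
    rintro _ ⟨_, ⟨a, b, rfl⟩, rfl⟩
    exact ⟨MulAut.conj c a, MulAut.conj c b, (map_commutatorElement _ _ _).symm⟩
  exact Set.pow_subset_pow_left hconj (Set.image_pow (MulAut.conj c) _ n ▸ ⟨g, hg, rfl⟩)

lemma exists_mem_commutatorSet_pow (hg : g ∈ commutator G) : ∃ n, g ∈ commutatorSet G ^ n := by
  rw [commutator_eq_closure] at hg
  induction hg using Subgroup.closure_induction with
  | mem x hx => exact ⟨1, by rwa [pow_one]⟩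
  | one => exact ⟨0, by rw [pow_zero]; rfl⟩
  | mul x y _ _ hx hy =>
    obtain ⟨m, hm⟩ := hx
    obtain ⟨n, hn⟩ := hy
    exact ⟨m + n, pow_add (commutatorSet G) m n ▸ Set.mul_mem_mul hm hn⟩
  | inv x _ hx =>
    obtain ⟨n, hn⟩ := hx
    exact ⟨n, inv_mem_commutatorSet_pow hn⟩

lemma isCommProd_iff_mem_commutatorSet_pow : IsCommProd n g ↔ g ∈ commutatorSet G ^ n := by
  rw [Set.mem_pow]
  constructor
  · rintro ⟨a, b, rfl⟩
    exact ⟨fun i => ⟨⁅a i, b i⁆, commutator_mem_commutatorSet _ _⟩, rfl⟩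
  · rintro ⟨f, rfl⟩
    choose a b hab using fun i => (f i).2
    exact ⟨a, b, by simp only [hab]⟩

lemma cl_le_of_mem_commutatorSet_pow (hg : g ∈ commutatorSet G ^ n) : cl g ≤ n :=
  Nat.sInf_le (isCommProd_iff_mem_commutatorSet_pow.2 hg)

lemma mem_commutatorSet_pow_cl (hg : g ∈ commutator G) : g ∈ commutatorSet G ^ cl g :=
  isCommProd_iff_mem_commutatorSet_pow.1 <| Nat.sInf_mem <| by
    obtain ⟨n, hn⟩ := exists_mem_commutatorSet_pow hg
    exact ⟨n, isCommProd_iff_mem_commutatorSet_pow.2 hn⟩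

lemma union_inv_subset_commutatorSet_pow_sup_cl {S : Set G} {T : Finset G}
    (hT : (T : Set G) ⊆ commutator G) (horb : ∀ s ∈ S, ∃ g : G, ∃ t ∈ T, s = g * t * g⁻¹) :
    S ∪ S⁻¹ ⊆ commutatorSet G ^ T.sup cl := by
  have hS : ∀ s ∈ S, s ∈ commutatorSet G ^ T.sup cl := by
    intro s hs
    obtain ⟨g, t, ht, rfl⟩ := horb s hs
    refine conj_mem_commutatorSet_pow ?_ g
    exact Set.pow_subset_pow_right (one_mem_commutatorSet G) (Finset.le_sup ht)
      (mem_commutatorSet_pow_cl (hT ht))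
  rintro s (hs | hs)
  exacts [hS s hs, inv_inv s ▸ inv_mem_commutatorSet_pow (hS _ hs)]

lemma cl_le_mul_of_isWordProd {S : Set G} {M k : ℕ} {w : G}
    (hS : S ∪ S⁻¹ ⊆ commutatorSet G ^ M) (hw : IsWordProd S k w) : cl w ≤ k * M := by
  obtain ⟨f, hf, rfl⟩ := hw
  refine cl_le_of_mem_commutatorSet_pow ?_
  rw [mul_comm, pow_mul]
  exact Set.mem_pow.2 ⟨fun i => ⟨f i, hS (hf i)⟩, rfl⟩

end commutatorSet

theorem scl_eq_zero_of_bounded_wordNorm_general {G : Type*} [Group G] (H : Subgroup G)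
    (hHcomm : H ≤ commutator G) (S : Set G) (hSH : S ⊆ (H : Set G))
    (T : Finset G) (hTS : (T : Set G) ⊆ S)
    (horb : ∀ s ∈ S, ∃ g : G, ∃ t ∈ T, s = g * t * g⁻¹)
    (C : ℕ) (hC : ∀ h ∈ H, ∃ n ≤ C, IsWordProd S n h) :
    ∀ h ∈ H, Filter.Tendsto (fun n : ℕ => (cl (h ^ n) : ℝ) / n)
      Filter.atTop (nhds 0) := by
  intro h hh
  have hgen : S ∪ S⁻¹ ⊆ commutatorSet G ^ T.sup cl :=
    union_inv_subset_commutatorSet_pow_sup_cl (fun t ht => hHcomm (hSH (hTS ht))) horb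
  have hbound (n : ℕ) : cl (h ^ n) ≤ C * T.sup cl := by
    obtain ⟨k, hkC, hk⟩ := hC _ (pow_mem hh n)
    exact (cl_le_mul_of_isWordProd hgen hk).trans (Nat.mul_le_mul_right _ hkC)
  exact tendsto_bdd_div_atTop_nhds_zero (b := 0) (B := ((C * T.sup cl : ℕ) : ℝ))
    (.of_forall fun _ => Nat.cast_nonneg _) (.of_forall fun n => Nat.cast_le.2 (hbound n))
    tendsto_natCast_atTop_atTop

/-- If `H ⊴ G` lies in `[G,G]`, `S` generates `H` and lies in finitely many
`G`-conjugacy orbits, and every element of `H` is a product of at most `C` elements of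
`S ∪ S⁻¹`, then every element of `H` has stable commutator length zero in `G`. -/
theorem scl_eq_zero_of_bounded_wordNorm {G : Type*} [Group G] (H : Subgroup G) [H.Normal]
    (hHcomm : H ≤ commutator G) (S : Set G) (hSH : S ⊆ (H : Set G))
    (hSgen : Subgroup.closure S = H)
    (T : Finset G) (hTS : (T : Set G) ⊆ S)
    (horb : ∀ s ∈ S, ∃ g : G, ∃ t ∈ T, s = g * t * g⁻¹)
    (C : ℕ) (hC : ∀ h ∈ H, ∃ n ≤ C, IsWordProd S n h) :
    ∀ h ∈ H, Filter.Tendsto (fun n : ℕ => (cl (h ^ n) : ℝ) / n)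
      Filter.atTop (nhds 0) :=
  scl_eq_zero_of_bounded_wordNorm_general H hHcomm S hSH T hTS horb C hC
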